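/- Let n ≥ 2 and for each j = 1, …, n let (l^j, r^j) be a Cantor-set construction with Cantor set C_j and initial interval I_1^j = [l^j(1), r^j(1)], and let x_1, …, x_n > 0 be reals such that each construction has density ratio at least x_j. Assume (i) Σ_{j=1}^n x_j/(x_j + 1) ≥ 1 and (ii) for all j, k: length(I_1^j) ≥ (x_j/(x_j + 1))·((x_k + 1)/(2x_k + 1))·length(I_1^k). Then I_1^1 + ⋯ + I_1^n = {Σ_{j=1}^n y_j : y_j ∈ C_j} (pointwise sums of sets). -/

import Mathlib

open Pointwise

/-- A Cantor-set construction on `ℝ`: functions `l r : ℕ → ℝ` (only indices `i ≥ 1` matter)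
with, for every `i ≥ 1`: `l i < r i`, `l (2i) = l i`, `r (2i+1) = r i`, `r (2i) < l (2i+1)`.
The interval `I_i` is `[l i, r i]` and the gap `G_i` is `(r (2i), l (2i+1))`. -/
structure CantorConstr where
  l : ℕ → ℝ
  r : ℕ → ℝ
  lt : ∀ i : ℕ, 1 ≤ i → l i < r i
  left_eq : ∀ i : ℕ, 1 ≤ i → l (2 * i) = l i
  right_eq : ∀ i : ℕ, 1 ≤ i → r (2 * i + 1) = r i
  gap_lt : ∀ i : ℕ, 1 ≤ i → r (2 * i) < l (2 * i + 1)

/-- The Cantor set associated to a construction: the initial interval minus all the gaps. -/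
def CantorConstr.cantorSet (c : CantorConstr) : Set ℝ :=
  Set.Icc (c.l 1) (c.r 1) \ ⋃ (i : ℕ) (_ : 1 ≤ i), Set.Ioo (c.r (2 * i)) (c.l (2 * i + 1))

/-- The construction has density ratio at least `x`. -/
def CantorConstr.densityGE (c : CantorConstr) (x : ℝ) : Prop :=
  ∀ i : ℕ, 1 ≤ i →
    min (c.r (2 * i) - c.l (2 * i)) (c.r (2 * i + 1) - c.l (2 * i + 1)) ≥
      x * (c.l (2 * i + 1) - c.r (2 * i))

/-- The length of the gap `G_i`. -/
def CantorConstr.gapLen (c : CantorConstr) (i : ℕ) : ℝ := c.l (2 * i + 1) - c.r (2 * i)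

/-- The construction is hole-decreasing. -/
def CantorConstr.holeDecr (c : CantorConstr) : Prop :=
  ∀ i : ℕ, 1 ≤ i → c.gapLen (2 * i) ≤ c.gapLen i ∧ c.gapLen (2 * i + 1) ≤ c.gapLen i

/-!
Fix `s` in `I_1^1 + ⋯ + I_1^n`. Descend in the `n` binary trees simultaneously, each time
replacing one current interval `I_{t_J}^J` by one of its two children, keeping `s` in the sum of
the current intervals and every current interval at least `x_j/(x_j+1)` times
`min (σ, ρ, b_k |I_{t_k}^k|)`, where `σ`, `ρ` are the distances from `s` to the two ends of that
sum and `b_k = (x_k+1)/(2x_k+1)`. If `J` maximises `b_J |I_{t_J}^J|`, then `Σ x_j/(x_j+1) ≥ 1`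
makes the other intervals long enough to absorb moving `s` past the gap of `I_{t_J}^J`, and the
density ratio makes the child so chosen long enough to keep the invariant. Descending `N` levels in
every tree writes `s` as a sum of points of the level-`N` approximations of the Cantor sets, and
compactness lets `N → ∞`.
-/

open Set

namespace CantorConstr

variable (c : CantorConstr)

lemma Icc_subset_of_div_two_eq {i u : ℕ} (hi : 1 ≤ i) (hu : u / 2 = i) :
    Icc (c.l u) (c.r u) ⊆ Icc (c.l i) (c.r i) := by
  have h₁ := c.left_eq i hi
  have h₂ := c.right_eq i hi
  have h₃ := c.gap_lt i hi
  have h₄ := c.lt (2 * i) (by omega)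
  have h₅ := c.lt (2 * i + 1) (by omega)
  obtain rfl | rfl : u = 2 * i ∨ u = 2 * i + 1 := by omega
  all_goals exact Icc_subset_Icc (by linarith) (by linarith)

lemma Icc_subset_of_div_pow_eq {m i k : ℕ} (hi : 1 ≤ i) (hm : m / 2 ^ k = i) :
    Icc (c.l m) (c.r m) ⊆ Icc (c.l i) (c.r i) := by
  induction k generalizing i with
  | zero => simp_all
  | succ k ih =>
    have hparent : m / 2 ^ k / 2 = i := by rwa [Nat.div_div_eq_div_mul, ← pow_succ]
    exact (ih (by omega) rfl).trans (c.Icc_subset_of_div_two_eq hi hparent)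

lemma gap_subset_Icc {i : ℕ} (hi : 1 ≤ i) :
    Ioo (c.r (2 * i)) (c.l (2 * i + 1)) ⊆ Icc (c.l i) (c.r i) := by
  have h₁ := c.left_eq i hi
  have h₂ := c.right_eq i hi
  have h₃ := c.lt (2 * i) (by omega)
  have h₄ := c.lt (2 * i + 1) (by omega)
  exact Ioo_subset_Icc_self.trans (Icc_subset_Icc (by linarith) (by linarith))

lemma disjoint_gap_Icc_child {i u : ℕ} (hi : 1 ≤ i) (hu : u / 2 = i) :
    Disjoint (Ioo (c.r (2 * i)) (c.l (2 * i + 1))) (Icc (c.l u) (c.r u)) := by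
  have h₁ := c.left_eq i hi
  have h₂ := c.right_eq i hi
  have h₃ := c.lt (2 * i) (by omega)
  have h₄ := c.lt (2 * i + 1) (by omega)
  obtain rfl | rfl : u = 2 * i ∨ u = 2 * i + 1 := by omega
  all_goals
    refine disjoint_left.2 fun z hz hz' => ?_
    simp only [mem_Ioo, mem_Icc] at hz hz'
    linarith

lemma disjoint_Icc_siblings {u v : ℕ} (h : u / 2 = v / 2) (hne : u ≠ v) (hpos : 1 ≤ u / 2) :
    Disjoint (Icc (c.l u) (c.r u)) (Icc (c.l v) (c.r v)) := by
  have hgap := c.gap_lt (u / 2) hpos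
  refine disjoint_left.2 fun z hz hz' => ?_
  simp only [mem_Icc] at hz hz'
  rcases (by omega : u = 2 * (u / 2) ∧ v = 2 * (u / 2) + 1 ∨ u = 2 * (u / 2) + 1 ∧ v = 2 * (u / 2))
    with ⟨hu, hv⟩ | ⟨hu, hv⟩ <;> rw [hu] at hz <;> rw [hv] at hz' <;> linarith

def len (i : ℕ) : ℝ := c.r i - c.l i

lemma len_eq_add {i : ℕ} (hi : 1 ≤ i) :
    c.len i = c.len (2 * i) + c.gapLen i + c.len (2 * i + 1) := by
  have h₁ := c.left_eq i hi
  have h₂ := c.right_eq i hi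
  simp only [len, gapLen]
  linarith

lemma densityGE.mul_gapLen_le_len_left {c : CantorConstr} {x : ℝ} (hd : c.densityGE x) {i : ℕ}
    (hi : 1 ≤ i) : x * c.gapLen i ≤ c.len (2 * i) :=
  (hd i hi).trans (min_le_left _ _)

lemma densityGE.mul_gapLen_le_len_right {c : CantorConstr} {x : ℝ} (hd : c.densityGE x) {i : ℕ}
    (hi : 1 ≤ i) : x * c.gapLen i ≤ c.len (2 * i + 1) :=
  (hd i hi).trans (min_le_right _ _)

def stage : ℕ → ℕ → Set ℝ
  | 0, i => Icc (c.l i) (c.r i)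
  | N + 1, i => stage N (2 * i) ∪ stage N (2 * i + 1)

lemma mem_stage_succ {N i : ℕ} {z : ℝ} :
    z ∈ c.stage (N + 1) i ↔ ∃ u, u / 2 = i ∧ z ∈ c.stage N u := by
  refine ⟨fun h => ?_, fun ⟨u, hu, hz⟩ => ?_⟩
  · rcases h with h | h
    exacts [⟨2 * i, by omega, h⟩, ⟨2 * i + 1, by omega, h⟩]
  · obtain rfl | rfl : u = 2 * i ∨ u = 2 * i + 1 := by omega
    exacts [Or.inl hz, Or.inr hz]

lemma stage_subset_Icc (N : ℕ) {i : ℕ} (hi : 1 ≤ i) :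
    c.stage N i ⊆ Icc (c.l i) (c.r i) := by
  induction N generalizing i with
  | zero => exact subset_rfl
  | succ N ih =>
    intro z hz
    obtain ⟨u, hu, hz⟩ := c.mem_stage_succ.1 hz
    exact c.Icc_subset_of_div_two_eq hi hu (ih (by omega) hz)

lemma stage_succ_subset (N : ℕ) {i : ℕ} (hi : 1 ≤ i) : c.stage (N + 1) i ⊆ c.stage N i := by
  induction N generalizing i with
  | zero =>
    intro z hz
    obtain ⟨u, hu, hz⟩ := c.mem_stage_succ.1 hz
    exact c.Icc_subset_of_div_two_eq hi hu hz
  | succ N ih =>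
    intro z hz
    obtain ⟨u, hu, hz⟩ := c.mem_stage_succ.1 hz
    exact c.mem_stage_succ.2 ⟨u, hu, ih (by omega) hz⟩

lemma isClosed_stage (N i : ℕ) : IsClosed (c.stage N i) := by
  induction N generalizing i with
  | zero => exact isClosed_Icc
  | succ N ih => exact (ih (2 * i)).union (ih (2 * i + 1))

lemma notMem_gap_of_mem_stage {N i k m : ℕ} {z : ℝ} (hi : 1 ≤ i) (hz : z ∈ c.stage N i)
    (hk : k < N) (hm : m / 2 ^ k = i) : z ∉ Ioo (c.r (2 * m)) (c.l (2 * m + 1)) := by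
  induction N generalizing i k with
  | zero => omega
  | succ N ih =>
    obtain ⟨u, hu, hzu⟩ := c.mem_stage_succ.1 hz
    have hzI := c.stage_subset_Icc N (by omega) hzu
    cases k with
    | zero =>
      simp only [pow_zero, Nat.div_one] at hm
      subst hm
      exact disjoint_right.1 (c.disjoint_gap_Icc_child hi hu) hzI
    | succ k =>
      have hv : m / 2 ^ k / 2 = i := by rwa [Nat.div_div_eq_div_mul, ← pow_succ]
      generalize hvdef : m / 2 ^ k = v at hv
      by_cases huv : v = u
      · exact ih (i := u) (by omega) hzu (by omega) (hvdef.trans huv)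
      · intro hgap
        have hm : 1 ≤ m := Nat.one_le_iff_ne_zero.2 (by rintro rfl; simp at hvdef; omega)
        have hzm := c.Icc_subset_of_div_pow_eq (by omega) hvdef (c.gap_subset_Icc hm hgap)
        exact disjoint_left.1 (c.disjoint_Icc_siblings (hv.trans hu.symm) huv (hv ▸ hi)) hzm hzI

lemma iInter_stage_subset_cantorSet : ⋂ N, c.stage N 1 ⊆ c.cantorSet := by
  intro z hz
  rw [mem_iInter] at hz
  refine ⟨c.stage_subset_Icc 0 le_rfl (hz 0), ?_⟩
  simp only [mem_iUnion, not_exists]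
  intro m hm
  have hlog : m / 2 ^ Nat.log 2 m = 1 :=
    Nat.div_eq_of_lt_le (by simpa using Nat.pow_log_le_self 2 (by omega : m ≠ 0))
      (by have := Nat.lt_pow_succ_log_self (by norm_num : 1 < 2) m; rw [pow_succ] at this; omega)
  exact c.notMem_gap_of_mem_stage le_rfl (hz _) (Nat.lt_succ_self _) hlog

end CantorConstr

open Finset

lemma sum_apply_update {ι α M : Type*} [Fintype ι] [DecidableEq ι] [AddCommGroup M]
    (g : ι → α → M) (t : ι → α) (J : ι) (u : α) :
    ∑ j, g j (Function.update t J u j) = ∑ j, g j (t j) + (g J u - g J (t J)) := by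
  simp_rw [Function.apply_update (f := g)]
  rw [sum_update_of_mem (mem_univ J), sum_eq_add_sum_sdiff_singleton_of_mem (mem_univ J)]
  abel

lemma sum_update_pred {ι : Type*} [Fintype ι] [DecidableEq ι] (N : ι → ℕ) {J : ι} (hJ : N J ≠ 0) :
    ∑ j, Function.update N J (N J - 1) j + 1 = ∑ j, N j := by
  rw [sum_update_of_mem (mem_univ J), sum_eq_add_sum_sdiff_singleton_of_mem (mem_univ J) N]
  omega

lemma exists_sum_eq_of_mem_Icc {ι : Type*} [Fintype ι] {p q : ι → ℝ} (hpq : p ≤ q) {s : ℝ}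
    (hs : s ∈ Icc (∑ j, p j) (∑ j, q j)) :
    ∃ f : ι → ℝ, ∑ j, f j = s ∧ ∀ j, f j ∈ Icc (p j) (q j) := by
  obtain ⟨θ, ⟨hθ₀, hθ₁⟩, hθs⟩ := intermediate_value_Icc zero_le_one
    (f := fun θ : ℝ => ∑ j, (p j + θ * (q j - p j))) (by fun_prop) (by simpa using hs)
  refine ⟨fun j => p j + θ * (q j - p j), hθs, fun j => ⟨?_, ?_⟩⟩ <;> nlinarith [hpq j]

lemma mul_le_sum_sub_of_forall_mul_le {ι : Type*} [Fintype ι] [DecidableEq ι] {a L : ι → ℝ}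
    {m : ℝ} (hm : 0 ≤ m) (ha : 1 ≤ ∑ j, a j) (h : ∀ j, a j * m ≤ L j) (J : ι) :
    (1 - a J) * m ≤ ∑ j, L j - L J :=
  calc (1 - a J) * m ≤ (∑ j, a j - a J) * m := by gcongr
    _ = ∑ j ∈ univ.erase J, a j * m := by rw [← sum_mul, sum_erase_eq_sub (mem_univ J)]
    _ ≤ ∑ j ∈ univ.erase J, L j := sum_le_sum fun j _ => h j
    _ = ∑ j, L j - L J := sum_erase_eq_sub (mem_univ J)

lemma child_fits_left_or_right {x σ ρ LL G LR : ℝ} (hx : 0 < x) (hLL : x * G ≤ LL)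
    (hLR : x * G ≤ LR)
    (hcov : min σ (min ρ ((x + 1) / (2 * x + 1) * (LL + G + LR))) ≤
      (x + 1) * (σ + ρ - (LL + G + LR))) :
    (G + LR ≤ ρ ∧ x / (x + 1) *
        min σ (min (ρ - (G + LR)) ((x + 1) / (2 * x + 1) * (LL + G + LR))) ≤ LL) ∨
    (LL + G ≤ σ ∧ x / (x + 1) *
        min (σ - (LL + G)) (min ρ ((x + 1) / (2 * x + 1) * (LL + G + LR))) ≤ LR) := by
  have ha : 0 ≤ x / (x + 1) := by positivity
  have hb : x / (x + 1) * ((x + 1) / (2 * x + 1) * (LL + G + LR)) =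
      x * (LL + G + LR) / (2 * x + 1) := by
    field_simp
  have hσ : σ < LL + G → x / (x + 1) * σ ≤ LL := fun h => by
    rw [div_mul_eq_mul_div, div_le_iff₀ (by positivity)]; nlinarith
  have hρ : ρ < G + LR → x / (x + 1) * ρ ≤ LR := fun h => by
    rw [div_mul_eq_mul_div, div_le_iff₀ (by positivity)]; nlinarith
  -- If neither child can carry `s`, the other intervals are jointly shorter than the gap `G`,
  -- and then each term of the minimum exceeds the right-hand side of `hcov`.
  have hnot_stuck : ¬ (σ < LL + G ∧ ρ < G + LR) := by
    rintro ⟨h₁, h₂⟩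
    have hb' : (x + 1) * G ≤ (x + 1) / (2 * x + 1) * (LL + G + LR) := by
      rw [div_mul_eq_mul_div, le_div_iff₀ (by positivity)]; nlinarith
    rcases min_cases σ (min ρ ((x + 1) / (2 * x + 1) * (LL + G + LR))) with ⟨h, -⟩ | ⟨h, -⟩
    · nlinarith
    rcases min_cases ρ ((x + 1) / (2 * x + 1) * (LL + G + LR)) with ⟨h', -⟩ | ⟨h', -⟩ <;>
      nlinarith
  by_cases hR : G + LR ≤ ρ
  · by_cases hL : LL + G ≤ σ
    · rcases le_total LR LL with h | h
      · refine Or.inl ⟨hR, (mul_le_mul_of_nonneg_left ((min_le_right _ _).trans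
          (min_le_right _ _)) ha).trans ?_⟩
        rw [hb, div_le_iff₀ (by positivity)]; nlinarith
      · refine Or.inr ⟨hL, (mul_le_mul_of_nonneg_left ((min_le_right _ _).trans
          (min_le_right _ _)) ha).trans ?_⟩
        rw [hb, div_le_iff₀ (by positivity)]; nlinarith
    · exact Or.inl ⟨hR, (mul_le_mul_of_nonneg_left (min_le_left _ _) ha).trans
        (hσ (not_le.1 hL))⟩
  · have hL : LL + G ≤ σ := by
      by_contra hL; exact hnot_stuck ⟨not_le.1 hL, not_le.1 hR⟩
    exact Or.inr ⟨hL, (mul_le_mul_of_nonneg_left ((min_le_right _ _).trans (min_le_left _ _))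
      ha).trans (hρ (not_le.1 hR))⟩

section Descent

open Function

variable {n : ℕ} (c : Fin n → CantorConstr) (x : Fin n → ℝ) (s : ℝ)

/-- `t j` is the current node of the `j`-th tree and `N j` the number of levels still to descend
in it; the lower bound is only required from the trees `k` that are still to be refined. -/
def LengthCondition (t N : Fin n → ℕ) : Prop :=
  ∀ j k, N k ≠ 0 → x j / (x j + 1) *
    min (s - ∑ i, (c i).l (t i))
      (min ((∑ i, (c i).r (t i)) - s) ((x k + 1) / (2 * x k + 1) * (c k).len (t k))) ≤
    (c j).len (t j)

variable {c x s}

lemma LengthCondition.refine {t N : Fin n → ℕ} (h : LengthCondition c x s t N)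
    (hx : ∀ j, 0 < x j) {J : Fin n} (hJ : N J ≠ 0)
    (hmax : ∀ k, N k ≠ 0 → (x k + 1) / (2 * x k + 1) * (c k).len (t k) ≤
      (x J + 1) / (2 * x J + 1) * (c J).len (t J))
    (hi : 1 ≤ t J) {u : ℕ} (hchild : u / 2 = t J)
    (hu : x J / (x J + 1) * min (s - ∑ i, (c i).l (update t J u i))
      (min ((∑ i, (c i).r (update t J u i)) - s)
        ((x J + 1) / (2 * x J + 1) * (c J).len (t J))) ≤ (c J).len u)
    (M : ℕ) : LengthCondition c x s (update t J u) (update N J M) := by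
  have ha : ∀ j, 0 ≤ x j / (x j + 1) := fun j => by have := hx j; positivity
  have hb : ∀ j, 0 ≤ (x j + 1) / (2 * x j + 1) := fun j => by have := hx j; positivity
  obtain ⟨hl, hr⟩ := (Icc_subset_Icc_iff ((c J).lt u (by omega)).le).1
    ((c J).Icc_subset_of_div_two_eq hi hchild)
  have hσ : s - ∑ i, (c i).l (update t J u i) ≤ s - ∑ i, (c i).l (t i) := by
    linarith [sum_apply_update (fun i => (c i).l) t J u]
  have hρ : (∑ i, (c i).r (update t J u i)) - s ≤ (∑ i, (c i).r (t i)) - s := by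
    linarith [sum_apply_update (fun i => (c i).r) t J u]
  have hlen : ∀ k, (c k).len (update t J u k) ≤ (c k).len (t k) := fun k => by
    rcases eq_or_ne k J with rfl | hk
    · simp only [update_self, CantorConstr.len]; linarith
    · rw [update_of_ne hk]
  intro j k hk
  rcases eq_or_ne j J with rfl | hj
  · rw [update_self]
    refine (mul_le_mul_of_nonneg_left (min_le_min le_rfl (min_le_min le_rfl ?_)) (ha j)).trans hu
    rcases eq_or_ne k j with rfl | hkj
    · exact mul_le_mul_of_nonneg_left (hlen k) (hb k)
    · rw [update_of_ne hkj] at hk ⊢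
      exact hmax k hk
  · rw [update_of_ne hj]
    have hk' : N k ≠ 0 := by
      rcases eq_or_ne k J with rfl | hkJ
      exacts [hJ, by rwa [update_of_ne hkJ] at hk]
    refine (mul_le_mul_of_nonneg_left (min_le_min hσ (min_le_min hρ ?_)) (ha j)).trans
      (h j k hk')
    exact mul_le_mul_of_nonneg_left (hlen k) (hb k)

lemma LengthCondition.min_le_mul_sum_len_sub {t N : Fin n → ℕ} (h : LengthCondition c x s t N)
    (hx : ∀ j, 0 < x j) (ht : ∀ j, 1 ≤ t j) (hl : ∑ j, (c j).l (t j) ≤ s)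
    (hr : s ≤ ∑ j, (c j).r (t j)) (h1 : 1 ≤ ∑ j, x j / (x j + 1)) {J : Fin n} (hJ : N J ≠ 0) :
    min (s - ∑ j, (c j).l (t j)) (min ((∑ j, (c j).r (t j)) - s)
        ((x J + 1) / (2 * x J + 1) * (c J).len (t J))) ≤
      (x J + 1) * ((s - ∑ j, (c j).l (t j)) + ((∑ j, (c j).r (t j)) - s) - (c J).len (t J)) := by
  have hxJ := hx J
  have hm : 0 ≤ min (s - ∑ j, (c j).l (t j)) (min ((∑ j, (c j).r (t j)) - s)
      ((x J + 1) / (2 * x J + 1) * (c J).len (t J))) := by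
    have := (c J).lt (t J) (ht J)
    simp only [le_min_iff, CantorConstr.len]
    exact ⟨by linarith, by linarith, by positivity⟩
  have hsum : ∑ j, (c j).len (t j) = (s - ∑ j, (c j).l (t j)) + ((∑ j, (c j).r (t j)) - s) := by
    simp only [CantorConstr.len, sum_sub_distrib]; ring
  have := mul_le_sum_sub_of_forall_mul_le hm h1 (fun j => h j J hJ) J
  rwa [hsum, show 1 - x J / (x J + 1) = (x J + 1)⁻¹ by field_simp; ring,
    inv_mul_le_iff₀ (by positivity)] at this

lemma LengthCondition.exists_child {t N : Fin n → ℕ} (h : LengthCondition c x s t N)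
    (hx : ∀ j, 0 < x j) (hd : ∀ j, (c j).densityGE (x j)) (h1 : 1 ≤ ∑ j, x j / (x j + 1))
    (ht : ∀ j, 1 ≤ t j) (hl : ∑ j, (c j).l (t j) ≤ s) (hr : s ≤ ∑ j, (c j).r (t j))
    {J : Fin n} (hJ : N J ≠ 0)
    (hmax : ∀ k, N k ≠ 0 → (x k + 1) / (2 * x k + 1) * (c k).len (t k) ≤
      (x J + 1) / (2 * x J + 1) * (c J).len (t J)) :
    ∃ u, u / 2 = t J ∧ ∑ j, (c j).l (update t J u j) ≤ s ∧ s ≤ ∑ j, (c j).r (update t J u j) ∧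
      LengthCondition c x s (update t J u) (update N J (N J - 1)) := by
  have hi := ht J
  have hxJ := hx J
  set σ := s - ∑ j, (c j).l (t j)
  set ρ := (∑ j, (c j).r (t j)) - s
  set LL := (c J).len (2 * t J)
  set G := (c J).gapLen (t J)
  set LR := (c J).len (2 * t J + 1)
  have hsplit : (c J).len (t J) = LL + G + LR := (c J).len_eq_add hi
  have hcov := h.min_le_mul_sum_len_sub hx ht hl hr h1 hJ
  rw [hsplit] at hcov
  have hLL : (c J).r (2 * t J) = (c J).l (t J) + LL := by
    simp only [LL, CantorConstr.len, (c J).left_eq (t J) hi]; ring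
  have hLR : (c J).l (2 * t J + 1) = (c J).r (t J) - LR := by
    simp only [LR, CantorConstr.len, (c J).right_eq (t J) hi]; ring
  have hlen : (c J).len (t J) = (c J).r (t J) - (c J).l (t J) := rfl
  have hl := sum_apply_update (fun j => (c j).l) t J
  have hr := sum_apply_update (fun j => (c j).r) t J
  rcases child_fits_left_or_right hxJ ((hd J).mul_gapLen_le_len_left hi)
    ((hd J).mul_gapLen_le_len_right hi) hcov with ⟨hfit, hgood⟩ | ⟨hfit, hgood⟩
  · have hσ : s - ∑ j, (c j).l (update t J (2 * t J) j) = σ := by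
      rw [hl, (c J).left_eq (t J) hi]; ring
    have hρ : (∑ j, (c j).r (update t J (2 * t J) j)) - s = ρ - (G + LR) := by
      rw [hr, hLL]; linarith
    refine ⟨2 * t J, by omega, by linarith, by linarith, h.refine hx hJ hmax hi (by omega) ?_ _⟩
    rwa [hσ, hρ, hsplit]
  · have hσ : s - ∑ j, (c j).l (update t J (2 * t J + 1) j) = σ - (LL + G) := by
      rw [hl, hLR]; linarith
    have hρ : (∑ j, (c j).r (update t J (2 * t J + 1) j)) - s = ρ := by
      rw [hr, (c J).right_eq (t J) hi]; ring
    refine ⟨2 * t J + 1, by omega, by linarith, by linarith,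
      h.refine hx hJ hmax hi (by omega) ?_ _⟩
    rwa [hσ, hρ, hsplit]

lemma lengthCondition_one {N : Fin n → ℕ} (hx : ∀ j, 0 < x j)
    (h2 : ∀ j k, (c j).r 1 - (c j).l 1 ≥
      x j / (x j + 1) * ((x k + 1) / (2 * x k + 1) * ((c k).r 1 - (c k).l 1))) :
    LengthCondition c x s (fun _ => 1) N := fun j k _ =>
  (mul_le_mul_of_nonneg_left ((min_le_right _ _).trans (min_le_right _ _))
    (by have := hx j; positivity)).trans (h2 j k)

theorem LengthCondition.exists_sum_eq_forall_mem_stage (hx : ∀ j, 0 < x j)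
    (hd : ∀ j, (c j).densityGE (x j)) (h1 : 1 ≤ ∑ j, x j / (x j + 1)) {t N : Fin n → ℕ}
    (h : LengthCondition c x s t N) (ht : ∀ j, 1 ≤ t j) (hl : ∑ j, (c j).l (t j) ≤ s)
    (hr : s ≤ ∑ j, (c j).r (t j)) :
    ∃ f : Fin n → ℝ, ∑ j, f j = s ∧ ∀ j, f j ∈ (c j).stage (N j) (t j) := by
  induction hμ : ∑ j, N j generalizing t N with
  | zero =>
    have hN : ∀ j, N j = 0 := fun j => (sum_eq_zero_iff.1 hμ) j (mem_univ j)
    simp only [hN, CantorConstr.stage]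
    exact exists_sum_eq_of_mem_Icc (fun j => ((c j).lt (t j) (ht j)).le) ⟨hl, hr⟩
  | succ μ ih =>
    obtain ⟨J, hJ, hmax⟩ := (univ.filter fun k => N k ≠ 0).exists_max_image
      (fun k => (x k + 1) / (2 * x k + 1) * (c k).len (t k))
      (by
        obtain ⟨k, -, hk⟩ := exists_ne_zero_of_sum_ne_zero (hμ.trans_ne μ.succ_ne_zero)
        exact ⟨k, by simpa using hk⟩)
    simp only [mem_filter, Finset.mem_univ, true_and] at hJ hmax
    obtain ⟨u, hu, hl', hr', h'⟩ := h.exists_child hx hd h1 ht hl hr hJ hmax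
    have ht' : ∀ j, 1 ≤ update t J u j := fun j => by
      rcases eq_or_ne j J with rfl | hj
      · rw [update_self]; have := ht j; omega
      · rw [update_of_ne hj]; exact ht j
    obtain ⟨f, hfs, hf⟩ := ih h' ht' hl' hr' (by have := sum_update_pred N hJ; omega)
    refine ⟨f, hfs, fun j => ?_⟩
    rcases eq_or_ne j J with rfl | hj
    · have hfj := hf j
      rw [update_self, update_self] at hfj
      rw [← Nat.sub_add_cancel (Nat.one_le_iff_ne_zero.2 hJ)]
      exact (c j).mem_stage_succ.2 ⟨u, hu, hfj⟩
    · simpa [update_of_ne hj] using hf j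

end Descent

lemma exists_mem_cantorSet_sum_eq_of_forall_stage {n : ℕ} (c : Fin n → CantorConstr) (s : ℝ)
    (h : ∀ N, ∃ f : Fin n → ℝ, ∑ j, f j = s ∧ ∀ j, f j ∈ (c j).stage N 1) :
    ∃ f : Fin n → ℝ, (∀ j, f j ∈ (c j).cantorSet) ∧ s = ∑ j, f j := by
  set K : ℕ → Set (Fin n → ℝ) := fun N => {f | ∑ j, f j = s} ∩ univ.pi fun j => (c j).stage N 1
  have hclosed : ∀ N, IsClosed (K N) := fun N =>
    (isClosed_eq (by fun_prop) continuous_const).inter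
      (isClosed_set_pi fun j _ => (c j).isClosed_stage N 1)
  have hcompact : IsCompact (K 0) :=
    (isCompact_univ_pi fun j => isCompact_Icc).of_isClosed_subset (hclosed 0) inter_subset_right
  obtain ⟨f, hf⟩ := hcompact.nonempty_iInter_of_sequence_nonempty_isCompact_isClosed K
    (fun N => inter_subset_inter_right _ (pi_mono fun j _ => (c j).stage_succ_subset N le_rfl))
    (fun N => by simpa [K, Set.Nonempty, and_comm] using h N) hclosed
  simp only [K, mem_iInter, mem_inter_iff, mem_univ_pi] at hf
  exact ⟨f, fun j => (c j).iInter_stage_subset_cantorSet (mem_iInter.2 fun N => (hf N).2 j),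
    ((hf 0).1).symm⟩

theorem interval_sum_eq_cantor_sum (n : ℕ)
    (c : Fin n → CantorConstr) (x : Fin n → ℝ)
    (hx : ∀ j, 0 < x j)
    (hd : ∀ j, (c j).densityGE (x j))
    (h1 : (∑ j, x j / (x j + 1)) ≥ 1)
    (h2 : ∀ j k, (c j).r 1 - (c j).l 1 ≥
      x j / (x j + 1) * ((x k + 1) / (2 * x k + 1) * ((c k).r 1 - (c k).l 1))) :
    {s : ℝ | ∃ f : Fin n → ℝ, (∀ j, f j ∈ Set.Icc ((c j).l 1) ((c j).r 1)) ∧ s = ∑ j, f j} =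
      {s : ℝ | ∃ f : Fin n → ℝ, (∀ j, f j ∈ (c j).cantorSet) ∧ s = ∑ j, f j} := by
  ext s
  refine ⟨fun ⟨f, hf, hs⟩ => exists_mem_cantorSet_sum_eq_of_forall_stage c s fun N => ?_,
    fun ⟨f, hf, hs⟩ => ⟨f, fun j => (hf j).1, hs⟩⟩
  exact (lengthCondition_one (N := fun _ => N) hx h2).exists_sum_eq_forall_mem_stage
    hx hd h1 (fun _ => le_rfl) (hs ▸ Finset.sum_le_sum fun j _ => (hf j).1)
    (hs ▸ Finset.sum_le_sum fun j _ => (hf j).2)
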